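/- For α, β ∈ ℂ with α ≠ β and α·β ≠ 1, the algebras G₀₅^α and G₀₅^β (products e₁·e₂ = e₂, e₁·e₃ = α e₃ resp. β e₃) are not isomorphic. -/
import Mathlib


/-- Multiplication of G₀₅^γ on ℂ³: e₁e₂ = e₂, e₁e₃ = γ e₃. -/
noncomputable def mulG05 (γ : ℂ) (x y : Fin 3 → ℂ) : Fin 3 → ℂ :=
  ![0, x 0 * y 1, γ * (x 0 * y 2)]

/-- for α ≠ β with α·β ≠ 1, G₀₅^α and G₀₅^β are not isomorphic. -/
theorem stmt_12 (α β : ℂ) (hne : α ≠ β) (hprod : α * β ≠ 1) :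
    ¬ ∃ φ : (Fin 3 → ℂ) ≃ₗ[ℂ] (Fin 3 → ℂ),
      ∀ x y, φ (mulG05 α x y) = mulG05 β (φ x) (φ y) := by
  rintro ⟨φ, h⟩
  set e1 : Fin 3 → ℂ := ![1,0,0] with he1
  set e2 : Fin 3 → ℂ := ![0,1,0] with he2
  set e3 : Fin 3 → ℂ := ![0,0,1] with he3
  set c : ℂ := φ e1 0 with hc
  set p : Fin 3 → ℂ := φ e2 with hp
  set q : Fin 3 → ℂ := φ e3 with hq
  -- p = mulG05 β (φ e1) p
  have key2 : mulG05 α e1 e2 = e2 := by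
    funext i; fin_cases i <;> simp [mulG05, he1, he2]
  have key3 : mulG05 α e1 e3 = α • e3 := by
    funext i; fin_cases i <;> simp [mulG05, he1, he3]
  have h12 : p = mulG05 β (φ e1) p := by
    have := h e1 e2; rw [key2] at this; exact this
  have h13 : α • q = mulG05 β (φ e1) q := by
    have := h e1 e3; rw [key3, map_smul] at this; exact this
  have hp0 : p 0 = 0 := by
    have := congrFun h12 0; simpa [mulG05] using this
  have hp1 : p 1 = c * p 1 := by
    have := congrFun h12 1; simpa [mulG05, hc] using this
  have hp2 : p 2 = β * (c * p 2) := by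
    have := congrFun h12 2; simpa [mulG05, hc] using this
  have hq1 : α * q 1 = c * q 1 := by
    have := congrFun h13 1; simpa [mulG05, hc] using this
  have hq2 : α * q 2 = β * (c * q 2) := by
    have := congrFun h13 2; simpa [mulG05, hc] using this
  -- q 0 = 0 : since e3 * x = 0 in A, q annihilates everything in B
  have hq0 : q 0 = 0 := by
    have hz : mulG05 α e3 (φ.symm e2) = 0 := by
      funext i; fin_cases i <;> simp [mulG05, he3]
    have := h e3 (φ.symm e2)
    rw [hz, map_zero, φ.apply_symm_apply] at this
    have := congrFun this 1
    simpa [mulG05, he2, hq] using this.symm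
  have hpne : p ≠ 0 := by
    simp only [hp, ne_eq, LinearEquiv.map_eq_zero_iff]
    intro hz
    have := congrFun hz 1; simp [he2] at this
  have hqne : q ≠ 0 := by
    simp only [hq, ne_eq, LinearEquiv.map_eq_zero_iff]
    intro hz
    have := congrFun hz 2; simp [he3] at this
  -- the independence argument used in the α = 1 subcases
  have indep : ∀ a b : ℂ, a • p = b • q → a • e2 = b • e3 := by
    intro a b hab
    apply φ.injective
    rw [map_smul, map_smul]; exact hab
  by_cases hcp : p 1 = 0
  · -- then p 2 ≠ 0, so β * c = 1
    have hp2ne : p 2 ≠ 0 := by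
      intro hz
      apply hpne
      funext i; fin_cases i <;> simp [hp0, hcp, hz]
    have hbc : β * c = 1 := by
      have : (β * c - 1) * p 2 = 0 := by ring_nf; linear_combination -hp2
      rcases mul_eq_zero.mp this with h' | h'
      · linear_combination h'
      · exact absurd h' hp2ne
    have hq1z : q 1 = 0 := by
      have : (α * β - 1) * q 1 = 0 := by
        have : β * (α * q 1) = β * (c * q 1) := by rw [hq1]
        linear_combination this + q 1 * hbc
      rcases mul_eq_zero.mp this with h' | h'
      · exact absurd (sub_eq_zero.mp h') hprod
      · exact h'
    have hq2e : (α - 1) * q 2 = 0 := by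
      have hb : β * (c * q 2) = (β * c) * q 2 := by ring
      rw [hb, hbc, one_mul] at hq2
      linear_combination hq2
    rcases mul_eq_zero.mp hq2e with ha1 | hq2z
    · -- α = 1 : q = (0,0,q2), p = (0,0,p2)
      have ha1 : α = 1 := by linear_combination ha1
      have hq2ne : q 2 ≠ 0 := by
        intro hz; apply hqne; funext i; fin_cases i <;> simp [hq0, hq1z, hz]
      have : q 2 • p = p 2 • q := by
        funext i; fin_cases i <;> simp [hp0, hq0, hcp, hq1z] <;> ring
      have := congrFun (indep _ _ this) 1
      simp [he2, he3] at this
      exact hq2ne this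
    · apply hqne; funext i; fin_cases i <;> simp [hq0, hq1z, hq2z]
  · -- p 1 ≠ 0, so c = 1
    have hc1 : c = 1 := by
      have : (c - 1) * p 1 = 0 := by linear_combination -hp1
      rcases mul_eq_zero.mp this with h' | h'
      · linear_combination h'
      · exact absurd h' hcp
    rw [hc1] at hq1 hq2 hp2
    have hq2z : q 2 = 0 := by
      have : (α - β) * q 2 = 0 := by linear_combination hq2
      rcases mul_eq_zero.mp this with h' | h'
      · exact absurd (sub_eq_zero.mp h') hne
      · exact h'
    have hq1e : (α - 1) * q 1 = 0 := by linear_combination hq1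
    rcases mul_eq_zero.mp hq1e with ha1 | hq1z
    · have ha1 : α = 1 := by linear_combination ha1
      have hq1ne : q 1 ≠ 0 := by
        intro hz; apply hqne; funext i; fin_cases i <;> simp [hq0, hq2z, hz]
      have hp2z : p 2 = 0 := by
        have : (1 - β) * p 2 = 0 := by linear_combination hp2
        rcases mul_eq_zero.mp this with h' | h'
        · exfalso; apply hne; rw [ha1]; linear_combination h'
        · exact h'
      have : q 1 • p = p 1 • q := by
        funext i; fin_cases i <;> simp [hp0, hq0, hp2z, hq2z] <;> ring
      have := congrFun (indep _ _ this) 2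
      simp [he2, he3] at this
      exact hcp this.symm
    · apply hqne; funext i; fin_cases i <;> simp [hq0, hq1z, hq2z]
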